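/- For integers m ≥ k ≥ 1 and any 1 ≤ a_1 < a_2 < ... < a_{k+1} ≤ n, the cellular boundary of the stair convex chain satisfies ∂ stc^m_k(a_1,...,a_{k+1}) = Σ_{i=1}^{k+1} stc^m_{k−1}(a_1, ..., â_i, ..., a_{k+1}), i.e., stair convex chains behave like simplices under the boundary operator of the grid complex. -/

import Mathlib

/-- A cell of a grid complex `G[n]^m`: a list of `m` factors, each either a
vertex `{a}` (encoded `(a, false)`) or a unit interval `[a, a+1]` (encoded `(a, true)`). -/
abbrev GCell := List (ℕ × Bool)

/-- Cellular chains with `ℤ/2` coefficients. -/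
abbrev GChain := GCell →₀ ZMod 2

/-- Product of chains, induced by concatenation of cells. -/
noncomputable def prodC (α β : GChain) : GChain :=
  α.sum fun c x => β.sum fun d y => Finsupp.single (c ++ d) (x * y)

/-- The vertex `{a}` of `G[n]`, as a chain. -/
noncomputable def vtx (a : ℕ) : GChain := Finsupp.single [(a, false)] 1

/-- The unit interval `[a, a+1]` of `G[n]`, as a chain. -/
noncomputable def seg (a : ℕ) : GChain := Finsupp.single [(a, true)] 1

/-- The 1-chain `[a,b] = [a,a+1] + ... + [b-1,b]` (symmetrized so `[b,a] = [a,b]`). -/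
noncomputable def intervalC (a b : ℕ) : GChain :=
  ∑ j ∈ Finset.Ico (min a b) (max a b), seg j

/-- The diagonal vertex `(a, ..., a)` of `G[n]^m`. -/
noncomputable def diag (m a : ℕ) : GChain := Finsupp.single (List.replicate m (a, false)) 1

/-- Stair convex chains, with the list of parameters in *reverse* (decreasing) order. -/
noncomputable def stcR : ℕ → List ℕ → GChain
  | 0, [_] => Finsupp.single [] 1
  | 0, _ => 0
  | _ + 1, [] => 0
  | m + 1, [a] => prodC (stcR m [a]) (vtx a)
  | m + 1, b :: c :: rest =>
      prodC (stcR m (c :: rest)) (intervalC c b) + prodC (stcR m (b :: c :: rest)) (vtx b)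

/-- The stair convex chain `stc^m_k (a₁, ..., a_{k+1})` where the parameters are
given as the (increasing) list `l = [a₁, ..., a_{k+1}]` with `k = l.length - 1`. -/
noncomputable def stc (m : ℕ) (l : List ℕ) : GChain := stcR m l.reverse

/-- Boundary of a cell, via the product rule `∂(σ×τ) = ∂σ×τ + σ×∂τ`,
`∂{a} = 0`, `∂[a,a+1] = {a} + {a+1}`. -/
noncomputable def bndCell : GCell → GChain
  | [] => 0
  | (a, false) :: rest => prodC (vtx a) (bndCell rest)
  | (a, true) :: rest =>
      prodC (vtx a + vtx (a + 1)) (Finsupp.single rest 1) + prodC (seg a) (bndCell rest)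

/-- The boundary operator on chains, extended linearly. -/
noncomputable def bnd (α : GChain) : GChain := α.sum fun c x => x • bndCell c

/-- Ordered product of a list of chains. -/
noncomputable def bigProd (l : List GChain) : GChain := l.foldr prodC (Finsupp.single [] 1)

/-- `c` is a cell of the grid complex `G[n]^m`. -/
def isCellOf (m n : ℕ) (c : GCell) : Prop :=
  c.length = m ∧ ∀ e ∈ c, 1 ≤ e.1 ∧ (if e.2 then e.1 + 1 else e.1) ≤ n

/-- Dimension of a cell: the number of interval factors. -/
def dimCell (c : GCell) : ℕ := (c.filter fun e => e.2).length

/-!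
Over `ℤ/2` the boundary is a derivation for the product of chains, without signs. Write the
largest parameter as `b` and the others as `t`; the recursion reads
`stc^{m+1}(t, b) = C + stc^m(t, b) × {b}`, where `C = stc^m(t) × [max t, b]` is a cone with
apex `b` over `stc^m(t)`. By induction on `m` the boundary of `stc^m(t, b)` is known, and,
since `∂[max t, b] = {max t} + {b}` and consecutive intervals glue, `C` satisfies the cone
formula `∂C = stc^{m+1}(t) + stc^m(t) × {b} + Σᵢ C(t without tᵢ)`. Adding the two, the copies
of `stc^m(t) × {b}` cancel and the remaining terms regroup into the faces of `stc^{m+1}(t, b)`.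
-/

lemma chain_add_self (γ : GChain) : γ + γ = 0 :=
  Finsupp.ext fun _ => CharTwo.add_self_eq_zero _

/- Cells multiply by concatenation, so chains form the monoid algebra of the free monoid on
cell factors and `prodC` is its multiplication; the algebra laws of `prodC` are read off there. -/
abbrev CellAlgebra := MonoidAlgebra (ZMod 2) (FreeMonoid (ℕ × Bool))

noncomputable def toCellAlgebra : GChain ≃ₗ[ZMod 2] CellAlgebra :=
  (MonoidAlgebra.coeffLinearEquiv (ZMod 2)).symm

lemma toCellAlgebra_single (c : GCell) (x : ZMod 2) :
    toCellAlgebra (Finsupp.single c x) = MonoidAlgebra.single (FreeMonoid.ofList c) x := rfl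

lemma toCellAlgebra_prodC (α β : GChain) :
    toCellAlgebra (prodC α β) = toCellAlgebra α * toCellAlgebra β := by
  rw [MonoidAlgebra.mul_def, prodC]
  simp only [map_finsuppSum]
  rfl

lemma prodC_zero_left (β : GChain) : prodC 0 β = 0 :=
  toCellAlgebra.injective <| by simp only [toCellAlgebra_prodC, map_zero, zero_mul]

lemma prodC_zero_right (α : GChain) : prodC α 0 = 0 :=
  toCellAlgebra.injective <| by simp only [toCellAlgebra_prodC, map_zero, mul_zero]

lemma prodC_add_left (α β γ : GChain) : prodC (α + β) γ = prodC α γ + prodC β γ :=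
  toCellAlgebra.injective <| by simp only [toCellAlgebra_prodC, map_add, add_mul]

lemma prodC_add_right (α β γ : GChain) : prodC α (β + γ) = prodC α β + prodC α γ :=
  toCellAlgebra.injective <| by simp only [toCellAlgebra_prodC, map_add, mul_add]

lemma prodC_smul_left (x : ZMod 2) (α β : GChain) : prodC (x • α) β = x • prodC α β :=
  toCellAlgebra.injective <| by simp only [toCellAlgebra_prodC, map_smul, smul_mul_assoc]

lemma prodC_smul_right (x : ZMod 2) (α β : GChain) : prodC α (x • β) = x • prodC α β :=
  toCellAlgebra.injective <| by simp only [toCellAlgebra_prodC, map_smul, mul_smul_comm]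

lemma prodC_sum_left {ι : Type*} (s : Finset ι) (f : ι → GChain) (γ : GChain) :
    prodC (∑ i ∈ s, f i) γ = ∑ i ∈ s, prodC (f i) γ :=
  toCellAlgebra.injective <| by simp only [toCellAlgebra_prodC, map_sum, Finset.sum_mul]

lemma prodC_assoc (α β γ : GChain) : prodC (prodC α β) γ = prodC α (prodC β γ) :=
  toCellAlgebra.injective <| by simp only [toCellAlgebra_prodC, mul_assoc]

lemma prodC_single_single (c d : GCell) (x y : ZMod 2) :
    prodC (Finsupp.single c x) (Finsupp.single d y) = Finsupp.single (c ++ d) (x * y) :=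
  toCellAlgebra.injective <| by
    simp only [toCellAlgebra_prodC, toCellAlgebra_single, MonoidAlgebra.single_mul_single]
    rfl

lemma prodC_empty_left (γ : GChain) : prodC (Finsupp.single [] 1) γ = γ :=
  toCellAlgebra.injective <| by rw [toCellAlgebra_prodC, toCellAlgebra_single]; exact one_mul _

lemma prodC_empty_right (γ : GChain) : prodC γ (Finsupp.single [] 1) = γ :=
  toCellAlgebra.injective <| by rw [toCellAlgebra_prodC, toCellAlgebra_single]; exact mul_one _

lemma bnd_eq_linearCombination (α : GChain) :
    bnd α = Finsupp.linearCombination (ZMod 2) bndCell α :=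
  (Finsupp.linearCombination_apply _ _).symm

lemma bnd_add (α β : GChain) : bnd (α + β) = bnd α + bnd β := by
  simp only [bnd_eq_linearCombination, map_add]

lemma bnd_sum {ι : Type*} (s : Finset ι) (f : ι → GChain) :
    bnd (∑ i ∈ s, f i) = ∑ i ∈ s, bnd (f i) := by
  simp only [bnd_eq_linearCombination, map_sum]

lemma bnd_single_one (c : GCell) : bnd (Finsupp.single c 1) = bndCell c := by
  rw [bnd_eq_linearCombination, Finsupp.linearCombination_single, one_smul]

lemma bndCell_append (c d : GCell) :
    bndCell (c ++ d) = prodC (bndCell c) (Finsupp.single d 1)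
      + prodC (Finsupp.single c 1) (bndCell d) := by
  have single_append (c d : GCell) : Finsupp.single (c ++ d) (1 : ZMod 2) =
      prodC (Finsupp.single c 1) (Finsupp.single d 1) := by rw [prodC_single_single, mul_one]
  induction c with
  | nil => rw [List.nil_append, bndCell, prodC_zero_left, zero_add, prodC_empty_left]
  | cons e c ih =>
    rw [List.cons_append, show Finsupp.single (e :: c) (1 : ZMod 2) = _ from single_append [e] c]
    obtain ⟨a, _ | _⟩ := e
    · rw [bndCell, bndCell, ih]
      simp only [prodC_add_right, prodC_assoc]
      rfl
    · rw [bndCell, bndCell, ih, single_append c d]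
      simp only [prodC_add_left, prodC_add_right, prodC_assoc, ← add_assoc]
      rfl

lemma bnd_prodC (α β : GChain) :
    bnd (prodC α β) = prodC (bnd α) β + prodC α (bnd β) := by
  induction α using Finsupp.induction_linear with
  | zero => simp [prodC_zero_left, bnd_eq_linearCombination]
  | add a b ha hb =>
    simp only [prodC_add_left, bnd_add] at *
    rw [ha, hb]; abel
  | single c x =>
    induction β using Finsupp.induction_linear with
    | zero => simp [prodC_zero_right, bnd_eq_linearCombination]
    | add a b ha hb =>
      simp only [prodC_add_right, bnd_add] at *
      rw [ha, hb]; abel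
    | single d y =>
      rw [← mul_one x, ← mul_one y, ← smul_eq_mul, ← smul_eq_mul, ← Finsupp.smul_single,
        ← Finsupp.smul_single]
      simp only [prodC_smul_left, prodC_smul_right, prodC_single_single, bnd_eq_linearCombination,
        map_smul, Finsupp.linearCombination_single, one_smul, mul_one, bndCell_append, smul_add]

lemma bnd_vtx (a : ℕ) : bnd (vtx a) = 0 := by
  rw [vtx, bnd_single_one, bndCell, bndCell, prodC_zero_right]

lemma bnd_seg (a : ℕ) : bnd (seg a) = vtx a + vtx (a + 1) := by
  rw [seg, bnd_single_one, bndCell, bndCell, prodC_zero_right, add_zero, prodC_empty_right]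

lemma intervalC_comm (a b : ℕ) : intervalC a b = intervalC b a := by
  rw [intervalC, intervalC, min_comm, max_comm]

lemma intervalC_of_le {a b : ℕ} (h : a ≤ b) : intervalC a b = ∑ j ∈ Finset.Ico a b, seg j := by
  rw [intervalC, min_eq_left h, max_eq_right h]

lemma bnd_intervalC (a b : ℕ) : bnd (intervalC a b) = vtx a + vtx b := by
  wlog h : a ≤ b generalizing a b
  · rw [intervalC_comm, this b a (le_of_not_ge h), add_comm]
  rw [intervalC_of_le h, bnd_sum]
  induction b, h using Nat.le_induction with
  | base => rw [Finset.Ico_self, Finset.sum_empty, chain_add_self]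
  | succ b hab ih =>
    rw [Finset.sum_Ico_succ_top hab, ih, bnd_seg, add_assoc, ← add_assoc (vtx b), chain_add_self,
      zero_add]

lemma intervalC_add_intervalC {a b c : ℕ} (hab : a ≤ b) (hbc : b ≤ c) :
    intervalC a b + intervalC b c = intervalC a c := by
  rw [intervalC_of_le hab, intervalC_of_le hbc, intervalC_of_le (hab.trans hbc),
    Finset.sum_Ico_consecutive _ hab hbc]

lemma List.sum_range_eraseIdx_cons {α M : Type*} [AddCommMonoid M] (f : List α → M) (b : α)
    (t : List α) :
    ∑ i ∈ Finset.range (b :: t).length, f ((b :: t).eraseIdx i) =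
      f t + ∑ i ∈ Finset.range t.length, f (b :: t.eraseIdx i) := by
  rw [List.length_cons, Finset.sum_range_succ', add_comm]
  rfl

lemma List.eraseIdx_reverse {α : Type*} {l : List α} {i : ℕ} (h : i < l.length) :
    l.reverse.eraseIdx i = (l.eraseIdx (l.length - 1 - i)).reverse := by
  induction l generalizing i with
  | nil => simp at h
  | cons x l ih =>
    rw [List.reverse_cons, List.length_cons, Nat.add_sub_cancel]
    rcases (Nat.lt_succ_iff.mp h).lt_or_eq with hi | rfl
    · rw [List.eraseIdx_append_of_lt_length (by simpa), ih hi,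
        show l.length - i = l.length - 1 - i + 1 by omega, List.eraseIdx_cons_succ,
        List.reverse_cons]
    · rw [List.eraseIdx_append_of_length_le (by simp), Nat.sub_self, List.eraseIdx_cons_zero,
        List.length_reverse, Nat.sub_self, List.eraseIdx_cons_zero, List.append_nil]

lemma stcR_nil (m : ℕ) : stcR m [] = 0 := by
  cases m <;> rfl

lemma stcR_zero_of_one_lt_length {l : List ℕ} (hl : 1 < l.length) : stcR 0 l = 0 := by
  match l, hl with
  | _ :: _ :: _, _ => rfl

lemma bnd_stcR_zero (l : List ℕ) :
    bnd (stcR 0 l) = ∑ i ∈ Finset.range l.length, stcR 0 (l.eraseIdx i) := by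
  match l with
  | [] => rfl
  | [_] => rw [stcR, bnd_single_one, bndCell]; rfl
  | [_, _] =>
    rw [List.sum_range_eraseIdx_cons, List.length_singleton, Finset.sum_range_one]
    exact (chain_add_self _).symm
  | _ :: _ :: _ :: _ =>
    refine (Finset.sum_eq_zero fun i hi => stcR_zero_of_one_lt_length ?_).symm
    rw [List.length_eraseIdx_of_lt (Finset.mem_range.mp hi)]
    simp

/- The first summand in the recursion of `stcR (m + 1) (b :: t)`: the cone with apex `b` over
`stc^m(t)`. The default `b` of `headD` is irrelevant, since `stcR m [] = 0`. -/
noncomputable def stcCone (m b : ℕ) (t : List ℕ) : GChain :=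
  prodC (stcR m t) (intervalC (t.headD b) b)

lemma stcCone_cons (m b c : ℕ) (t : List ℕ) :
    stcCone m b (c :: t) = prodC (stcR m (c :: t)) (intervalC c b) := rfl

lemma stcR_succ_cons (m b : ℕ) (t : List ℕ) :
    stcR (m + 1) (b :: t) = stcCone m b t + prodC (stcR m (b :: t)) (vtx b) := by
  cases t with
  | nil => rw [stcR, stcCone, stcR_nil, prodC_zero_left, zero_add]
  | cons c t => rfl

lemma stcR_succ_add_sum_stcCone (m b : ℕ) {t : List ℕ} (hl : (b :: t).Pairwise (· ≥ ·)) :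
    stcR (m + 1) t + ∑ i ∈ Finset.range t.length, stcCone m b (t.eraseIdx i) =
      ∑ i ∈ Finset.range t.length, prodC (stcR m (t.eraseIdx i)) (intervalC (t.headD b) b)
        + prodC (stcR m t) (vtx (t.headD b)) := by
  cases t with
  | nil => rw [stcR_nil, stcR_nil, prodC_zero_left]; rfl
  | cons c r =>
    have glue : stcCone m c r + stcCone m b r = prodC (stcR m r) (intervalC c b) := by
      cases r with
      | nil =>
        rw [stcCone, stcCone, stcR_nil, prodC_zero_left, prodC_zero_left, prodC_zero_left,
          add_zero]
      | cons d r =>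
        have hcb : c ≤ b := List.rel_of_pairwise_cons hl (by simp)
        have hdc : d ≤ c := List.rel_of_pairwise_cons hl.of_cons (by simp)
        rw [stcCone, stcCone, ← prodC_add_right, List.headD_cons, List.headD_cons,
          ← intervalC_add_intervalC hdc hcb, ← add_assoc, chain_add_self, zero_add]
    rw [List.headD_cons, List.sum_range_eraseIdx_cons (stcCone m b),
      List.sum_range_eraseIdx_cons (fun l => prodC (stcR m l) (intervalC c b)), stcR_succ_cons]
    simp only [stcCone_cons]
    linear_combination (norm := abel) glue

/- The cone formula `∂(b * σ) = σ + b * ∂σ`, where the base `σ = stc^m(t)` appears at both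
ends of the cone: as `stc^{m+1}(t)` and as `stc^m(t) × {b}`. -/
lemma bnd_stcCone (m b : ℕ) {t : List ℕ} (hl : (b :: t).Pairwise (· ≥ ·))
    (ht : bnd (stcR m t) = ∑ i ∈ Finset.range t.length, stcR m (t.eraseIdx i)) :
    bnd (stcCone m b t) = stcR (m + 1) t + prodC (stcR m t) (vtx b)
      + ∑ i ∈ Finset.range t.length, stcCone m b (t.eraseIdx i) := by
  rw [add_right_comm, stcR_succ_add_sum_stcCone m b hl, stcCone, bnd_prodC, ht, bnd_intervalC,
    prodC_sum_left, prodC_add_right, add_assoc]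

theorem bnd_stcR (m : ℕ) {l : List ℕ} (hl : l.Pairwise (· ≥ ·)) :
    bnd (stcR m l) = ∑ i ∈ Finset.range l.length, stcR m (l.eraseIdx i) := by
  induction m generalizing l with
  | zero => exact bnd_stcR_zero l
  | succ m ih =>
    cases l with
    | nil => rfl
    | cons b t =>
      rw [stcR_succ_cons, bnd_add, bnd_prodC, bnd_vtx, prodC_zero_right, add_zero,
        bnd_stcCone m b hl (ih hl.of_cons), ih hl, List.sum_range_eraseIdx_cons,
        List.sum_range_eraseIdx_cons]
      simp only [stcR_succ_cons, prodC_sum_left, prodC_add_left, Finset.sum_add_distrib]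
      linear_combination (norm := abel) chain_add_self (prodC (stcR m t) (vtx b))

theorem bnd_stc (m : ℕ) {l : List ℕ} (hl : l.Pairwise (· ≤ ·)) :
    bnd (stc m l) = ∑ i ∈ Finset.range l.length, stc m (l.eraseIdx i) := by
  rw [stc, bnd_stcR m (List.pairwise_reverse.mpr hl), List.length_reverse,
    ← Finset.sum_range_reflect]
  refine Finset.sum_congr rfl fun i hi => ?_
  have hi : i < l.length := Finset.mem_range.mp hi
  rw [List.eraseIdx_reverse (by omega), Nat.sub_sub_self (by omega), stc]

theorem stmt5_general (m k : ℕ) (a : Fin (k + 1) → ℕ) (ha : StrictMono a) :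
    bnd (stc m (List.ofFn a)) =
      ∑ i : Fin (k + 1), stc m ((List.ofFn a).eraseIdx i) := by
  rw [bnd_stc m (List.pairwise_ofFn.mpr fun _ _ hij => (ha hij).le), List.length_ofFn,
    Fin.sum_univ_eq_sum_range (fun i => stc m ((List.ofFn a).eraseIdx i))]

/-- Stair convex chains behave like simplices under the boundary operator:
for `m ≥ k ≥ 1` and `1 ≤ a₁ < ... < a_{k+1} ≤ n`,
`∂ stc^m_k(a₁,...,a_{k+1}) = Σ_{i=1}^{k+1} stc^m_{k-1}(a₁, ..., âᵢ, ..., a_{k+1})`. -/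
theorem stmt5 (n m k : ℕ) (hk : 1 ≤ k) (hkm : k ≤ m)
    (a : Fin (k + 1) → ℕ) (ha : StrictMono a) (h1 : 1 ≤ a 0) (hn : a (Fin.last k) ≤ n) :
    bnd (stc m (List.ofFn a)) =
      ∑ i : Fin (k + 1), stc m ((List.ofFn a).eraseIdx i) :=
  stmt5_general m k a ha
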